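/- arXiv:2408.16456 — 2 statements merged into one kernel-verified Lean document; each statement's English description precedes it below -/
import Mathlib

section
/- If q is an idempotent element of a continuous t-norm * on [a,b] (i.e., q*q = q), then for every p in [a,b], p * q = min(p, q). -/
/-!
Monotonicity and the unit `b` give `p * q ≤ min p q`. If `q ≤ p` and `q` is idempotent, then
`q = q * q ≤ p * q`. If `p ≤ q`, the continuous map `x ↦ x * q` sends `a` below `a` and `q` to
`q * q = q`, so by the intermediate value theorem `p = r * q` for some `r`; associativity then
gives `p * q = r * (q * q) = r * q = p`.
-/

open Set

section TNorm

variable {α : Type*} {a b : α} {f : α → α → α}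

theorem tnorm_le_left [Preorder α] (hid : ∀ p ∈ Icc a b, f p b = p)
    (hmono : ∀ p p' q q', p ∈ Icc a b → p' ∈ Icc a b → q ∈ Icc a b →
      q' ∈ Icc a b → p ≤ p' → q ≤ q' → f p q ≤ f p' q')
    {p q : α} (hp : p ∈ Icc a b) (hq : q ∈ Icc a b) : f p q ≤ p :=
  calc f p q ≤ f p b := hmono p p q b hp hp hq (right_mem_Icc.2 (hq.1.trans hq.2)) le_rfl hq.2
    _ = p := hid p hp

theorem tnorm_eq_right_of_idempotent_of_le [PartialOrder α]
    (hcomm : ∀ p ∈ Icc a b, ∀ q ∈ Icc a b, f p q = f q p)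
    (hid : ∀ p ∈ Icc a b, f p b = p)
    (hmono : ∀ p p' q q', p ∈ Icc a b → p' ∈ Icc a b → q ∈ Icc a b →
      q' ∈ Icc a b → p ≤ p' → q ≤ q' → f p q ≤ f p' q')
    {p q : α} (hp : p ∈ Icc a b) (hq : q ∈ Icc a b) (hidem : f q q = q) (hqp : q ≤ p) :
    f p q = q := by
  apply le_antisymm
  · rw [hcomm p hp q hq]
    exact tnorm_le_left hid hmono hq hp
  · calc q = f q q := hidem.symm
      _ ≤ f p q := hmono q p q q hq hp hq hq hqp le_rfl

theorem exists_tnorm_idempotent_eq_of_le [ConditionallyCompleteLinearOrder α]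
    [TopologicalSpace α] [OrderTopology α] [DenselyOrdered α]
    (hcont : ContinuousOn (fun p : α × α => f p.1 p.2) (Icc a b ×ˢ Icc a b))
    (hid : ∀ p ∈ Icc a b, f p b = p)
    (hmono : ∀ p p' q q', p ∈ Icc a b → p' ∈ Icc a b → q ∈ Icc a b →
      q' ∈ Icc a b → p ≤ p' → q ≤ q' → f p q ≤ f p' q')
    {p q : α} (hp : p ∈ Icc a b) (hq : q ∈ Icc a b) (hidem : f q q = q) (hpq : p ≤ q) :
    ∃ r ∈ Icc a b, f r q = p := by
  have hcont_q : ContinuousOn (fun x => f x q) (Icc a q) :=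
    hcont.comp (Continuous.prodMk_left q).continuousOn
      fun x hx => ⟨⟨hx.1, hx.2.trans hq.2⟩, hq⟩
  have hfa : f a q ≤ a := tnorm_le_left hid hmono (left_mem_Icc.2 (hp.1.trans hp.2)) hq
  obtain ⟨r, hr, hrp⟩ := intermediate_value_Icc hq.1 hcont_q
    (show p ∈ Icc (f a q) (f q q) from ⟨hfa.trans hp.1, hpq.trans_eq hidem.symm⟩)
  exact ⟨r, ⟨hr.1, hr.2.trans hq.2⟩, hrp⟩

theorem tnorm_eq_left_of_idempotent_of_le [ConditionallyCompleteLinearOrder α]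
    [TopologicalSpace α] [OrderTopology α] [DenselyOrdered α]
    (hcont : ContinuousOn (fun p : α × α => f p.1 p.2) (Icc a b ×ˢ Icc a b))
    (hassoc : ∀ p ∈ Icc a b, ∀ q ∈ Icc a b, ∀ r ∈ Icc a b, f (f p q) r = f p (f q r))
    (hid : ∀ p ∈ Icc a b, f p b = p)
    (hmono : ∀ p p' q q', p ∈ Icc a b → p' ∈ Icc a b → q ∈ Icc a b →
      q' ∈ Icc a b → p ≤ p' → q ≤ q' → f p q ≤ f p' q')
    {p q : α} (hp : p ∈ Icc a b) (hq : q ∈ Icc a b) (hidem : f q q = q) (hpq : p ≤ q) :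
    f p q = p := by
  obtain ⟨r, hr, rfl⟩ := exists_tnorm_idempotent_eq_of_le hcont hid hmono hp hq hidem hpq
  rw [hassoc r hr q hq q hq, hidem]

end TNorm

theorem idempotent_min_general (a b : ℝ) (f : ℝ → ℝ → ℝ)
    (hcont : ContinuousOn (fun p : ℝ × ℝ => f p.1 p.2) (Set.Icc a b ×ˢ Set.Icc a b))
    (hcomm : ∀ p ∈ Set.Icc a b, ∀ q ∈ Set.Icc a b, f p q = f q p)
    (hassoc : ∀ p ∈ Set.Icc a b, ∀ q ∈ Set.Icc a b, ∀ r ∈ Set.Icc a b,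
      f (f p q) r = f p (f q r))
    (hid : ∀ p ∈ Set.Icc a b, f p b = p)
    (hmono : ∀ p p' q q', p ∈ Set.Icc a b → p' ∈ Set.Icc a b → q ∈ Set.Icc a b →
      q' ∈ Set.Icc a b → p ≤ p' → q ≤ q' → f p q ≤ f p' q')
    (q : ℝ) (hq : q ∈ Set.Icc a b) (hidem : f q q = q) :
    ∀ p ∈ Set.Icc a b, f p q = min p q := by
  intro p hp
  rcases le_total p q with hpq | hqp
  · rw [min_eq_left hpq]
    exact tnorm_eq_left_of_idempotent_of_le hcont hassoc hid hmono hp hq hidem hpq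
  · rw [min_eq_right hqp]
    exact tnorm_eq_right_of_idempotent_of_le hcomm hid hmono hp hq hidem hqp

/-- If q is an idempotent element of a continuous t-norm on [a,b],
then p * q = min p q for every p in [a,b]. -/
theorem idempotent_min (a b : ℝ) (f : ℝ → ℝ → ℝ)
    (hmap : ∀ p ∈ Set.Icc a b, ∀ q ∈ Set.Icc a b, f p q ∈ Set.Icc a b)
    (hcont : ContinuousOn (fun p : ℝ × ℝ => f p.1 p.2) (Set.Icc a b ×ˢ Set.Icc a b))
    (hcomm : ∀ p ∈ Set.Icc a b, ∀ q ∈ Set.Icc a b, f p q = f q p)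
    (hassoc : ∀ p ∈ Set.Icc a b, ∀ q ∈ Set.Icc a b, ∀ r ∈ Set.Icc a b,
      f (f p q) r = f p (f q r))
    (hid : ∀ p ∈ Set.Icc a b, f p b = p)
    (hmono : ∀ p p' q q', p ∈ Set.Icc a b → p' ∈ Set.Icc a b → q ∈ Set.Icc a b →
      q' ∈ Set.Icc a b → p ≤ p' → q ≤ q' → f p q ≤ f p' q')
    (q : ℝ) (hq : q ∈ Set.Icc a b) (hidem : f q q = q) :
    ∀ p ∈ Set.Icc a b, f p q = min p q :=
  idempotent_min_general a b f hcont hcomm hassoc hid hmono q hq hidem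
end

section
/- Let *₁ and *₂ be continuous t-norms on [0,1], and let U₁, U₂ ⊆ [0,1] be open dense subsets. Suppose ψ : U₁ → U₂ is a strictly increasing bijection with ψ(x *₁ y) = ψ(x) *₂ ψ(y) for all x, y ∈ U₁. Then the map φ : [0,1] → [0,1] defined by φ(x) = sup{ψ(y) : y ∈ [0,x] ∩ U₁} (and φ(0)=0) is an order isomorphism of [0,1] extending ψ, and satisfies φ(x *₁ y) = φ(x) *₂ φ(y) for all x, y ∈ [0,1]; hence *₁ and *₂ are isomorphic continuous t-norms. -/
/-- A continuous t-norm on [0,1], as a real binary function. -/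
def IsContinuousTnorm (f : ℝ → ℝ → ℝ) : Prop :=
  (∀ x ∈ Set.Icc (0:ℝ) 1, ∀ y ∈ Set.Icc (0:ℝ) 1, f x y ∈ Set.Icc (0:ℝ) 1) ∧
  ContinuousOn (fun p : ℝ × ℝ => f p.1 p.2) (Set.Icc 0 1 ×ˢ Set.Icc 0 1) ∧
  (∀ x ∈ Set.Icc (0:ℝ) 1, ∀ y ∈ Set.Icc (0:ℝ) 1, f x y = f y x) ∧
  (∀ x ∈ Set.Icc (0:ℝ) 1, ∀ y ∈ Set.Icc (0:ℝ) 1, ∀ z ∈ Set.Icc (0:ℝ) 1,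
    f (f x y) z = f x (f y z)) ∧
  (∀ x ∈ Set.Icc (0:ℝ) 1, f x 1 = x) ∧
  (∀ x x' y y', x ∈ Set.Icc (0:ℝ) 1 → x' ∈ Set.Icc (0:ℝ) 1 → y ∈ Set.Icc (0:ℝ) 1 →
    y' ∈ Set.Icc (0:ℝ) 1 → x ≤ x' → y ≤ y' → f x y ≤ f x' y')

/-! The supremum extension `φ` of `ψ` is strictly monotone because `U₁` is dense, and maps
`[0,1]` onto itself because its image contains the dense set `U₂`; being an order isomorphism of
`[0,1]`, it is continuous. The homomorphism property of `ψ` says nothing when `x *₁ y ∉ U₁`, so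
`φ (x *₁ y)` is instead located by comparison with points `t ∈ U₁`: if, say, `t < x *₁ y`, the
intermediate value theorem in the first variable and openness of `U₁` give `s ≤ x` in `U₁` with
`t < s *₁ y ∈ U₁`, whence `ψ t ≤ ψ (s *₁ y) = ψ s *₂ ψ y ≤ ψ x *₂ ψ y`. This proves
`φ (x *₁ y) = φ x *₂ φ y` on `U₁ × U₁`, and continuity of both sides extends it to `[0,1]²`. -/

open Set

theorem StrictMonoOn.continuousOn_of_image_eq {α β : Type*} [LinearOrder α] [TopologicalSpace α]
    [OrderTopology α] [LinearOrder β] [TopologicalSpace β] [OrderTopology β]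
    {f : α → β} {s : Set α} {t : Set β} [s.OrdConnected] [t.OrdConnected]
    (hf : StrictMonoOn f s) (himage : f '' s = t) : ContinuousOn f s := by
  subst himage
  rw [continuousOn_iff_continuous_domRestrict]
  exact continuous_subtype_val.comp (hf.orderIso f s).continuous

theorem StrictMonoOn.surjOn_Icc_of_forall_exists_mem_Ioo {φ : ℝ → ℝ}
    (hφ : StrictMonoOn φ (Icc 0 1)) (hmaps : MapsTo φ (Icc 0 1) (Icc 0 1))
    (hdense : ∀ a b : ℝ, 0 ≤ a → a < b → b ≤ 1 → ∃ x ∈ Icc (0 : ℝ) 1, φ x ∈ Ioo a b) :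
    SurjOn φ (Icc 0 1) (Icc 0 1) := by
  intro z hz
  have h0 : (0 : ℝ) ∈ Icc (0 : ℝ) 1 := left_mem_Icc.2 zero_le_one
  set T := {t ∈ Icc (0 : ℝ) 1 | φ t ≤ z}
  have hT0 : (0 : ℝ) ∈ T := by
    refine ⟨h0, not_lt.1 fun hz0 => ?_⟩
    obtain ⟨x, hx, hzx, hx0⟩ := hdense z (φ 0) hz.1 hz0 (hmaps h0).2
    exact (hφ.lt_iff_lt hx h0).1 hx0 |>.not_ge hx.1
  have hTbdd : BddAbove T := ⟨1, fun t ht => ht.1.2⟩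
  have hsup : sSup T ∈ Icc (0 : ℝ) 1 := ⟨le_csSup hTbdd hT0, csSup_le ⟨0, hT0⟩ fun t ht => ht.1.2⟩
  refine ⟨sSup T, hsup, ?_⟩
  rcases lt_trichotomy (φ (sSup T)) z with hlt | heq | hgt
  · obtain ⟨x, hx, hxφ, hxz⟩ := hdense _ z (hmaps hsup).1 hlt hz.2
    have hxT : x ≤ sSup T := le_csSup hTbdd ⟨hx, hxz.le⟩
    exact absurd ((hφ.le_iff_le hx hsup).2 hxT) hxφ.not_ge
  · exact heq
  · obtain ⟨x, hx, hzx, hxφ⟩ := hdense z _ hz.1 hgt (hmaps hsup).2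
    obtain ⟨t, htT, hxt⟩ := exists_lt_of_lt_csSup ⟨0, hT0⟩ ((hφ.lt_iff_lt hx hsup).1 hxφ)
    exact absurd (hzx.trans (hφ hx htT.1 hxt)) htT.2.not_gt

theorem exists_mem_Ioo_of_Icc_subset_closure {U : Set ℝ} (hU : Icc 0 1 ⊆ closure U) {a b : ℝ}
    (ha : 0 ≤ a) (hab : a < b) (hb : b ≤ 1) : ∃ u ∈ U, u ∈ Ioo a b := by
  obtain ⟨m, hm⟩ := exists_between hab
  obtain ⟨u, huIoo, huU⟩ := mem_closure_iff.1 (hU ⟨ha.trans hm.1.le, hm.2.le.trans hb⟩) _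
    isOpen_Ioo hm
  exact ⟨u, huU, huIoo⟩

theorem ContinuousOn.exists_mem_apply_mem_of_subset_closure {X Y : Type*} [TopologicalSpace X]
    [TopologicalSpace Y] {h : X → Y} {s U : Set X} {V : Set Y} (hh : ContinuousOn h s)
    (hUs : U ⊆ s) (hU : s ⊆ closure U) (hV : IsOpen V) (hsV : (s ∩ h ⁻¹' V).Nonempty) :
    ∃ x ∈ U, h x ∈ V := by
  obtain ⟨O, hO, hOeq⟩ := continuousOn_iff'.1 hh V hV
  obtain ⟨x₀, hx₀s, hx₀V⟩ := hsV
  have hx₀O : x₀ ∈ O ∩ s := hOeq ▸ ⟨hx₀V, hx₀s⟩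
  obtain ⟨x, hxO, hxU⟩ := mem_closure_iff.1 (hU hx₀O.2) O hO hx₀O.1
  have hx : x ∈ h ⁻¹' V ∩ s := hOeq ▸ ⟨hxO, hUs hxU⟩
  exact ⟨x, hxU, hx.1⟩

namespace IsContinuousTnorm

variable {f : ℝ → ℝ → ℝ} {x x' y y' : ℝ}

theorem mem_Icc (hf : IsContinuousTnorm f) (hx : x ∈ Icc 0 1) (hy : y ∈ Icc 0 1) :
    f x y ∈ Icc 0 1 :=
  hf.1 x hx y hy

theorem continuousOn (hf : IsContinuousTnorm f) :
    ContinuousOn (fun p : ℝ × ℝ => f p.1 p.2) (Icc 0 1 ×ˢ Icc 0 1) :=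
  hf.2.1

theorem continuousOn_left (hf : IsContinuousTnorm f) (hy : y ∈ Icc 0 1) :
    ContinuousOn (fun x => f x y) (Icc 0 1) :=
  hf.continuousOn.comp (continuous_id.prodMk continuous_const).continuousOn
    fun _ hx => mk_mem_prod hx hy

theorem mono (hf : IsContinuousTnorm f) (hx : x ∈ Icc 0 1) (hx' : x' ∈ Icc 0 1)
    (hy : y ∈ Icc 0 1) (hy' : y' ∈ Icc 0 1) (hxx' : x ≤ x') (hyy' : y ≤ y') : f x y ≤ f x' y' :=
  hf.2.2.2.2.2 x x' y y' hx hx' hy hy' hxx' hyy'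

theorem one_left (hf : IsContinuousTnorm f) (hy : y ∈ Icc 0 1) : f 1 y = y := by
  rw [hf.2.2.1 1 (right_mem_Icc.2 zero_le_one) y hy, hf.2.2.2.2.1 y hy]

theorem le_right (hf : IsContinuousTnorm f) (hx : x ∈ Icc 0 1) (hy : y ∈ Icc 0 1) : f x y ≤ y :=
  (hf.mono hx (right_mem_Icc.2 zero_le_one) hy hy hx.2 le_rfl).trans_eq (hf.one_left hy)

theorem zero_left (hf : IsContinuousTnorm f) (hy : y ∈ Icc 0 1) : f 0 y = 0 := by
  have h0 : (0 : ℝ) ∈ Icc (0 : ℝ) 1 := left_mem_Icc.2 zero_le_one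
  exact le_antisymm ((hf.mono h0 h0 hy (right_mem_Icc.2 zero_le_one) le_rfl hy.2).trans_eq
    (hf.2.2.2.2.1 0 h0)) (hf.mem_Icc h0 hy).1

theorem exists_mem_apply_mem_Ioo (hf : IsContinuousTnorm f) {U : Set ℝ} (hU : U ⊆ Icc 0 1)
    (hUopen : IsOpen U) (hUdense : Icc 0 1 ⊆ closure U) {x₀ x₁ a b : ℝ} (hx₀ : x₀ ∈ Icc 0 1)
    (hx₁ : x₁ ∈ Icc 0 1) (hy : y ∈ Icc 0 1) (hx : x₀ ≤ x₁) (ha : f x₀ y ≤ a) (hab : a < b)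
    (hb : b ≤ f x₁ y) : ∃ s ∈ U, f s y ∈ U ∩ Ioo a b := by
  obtain ⟨u, hu, hu'⟩ := exists_mem_Ioo_of_Icc_subset_closure hUdense
    ((hf.mem_Icc hx₀ hy).1.trans ha) hab (hb.trans (hf.mem_Icc hx₁ hy).2)
  obtain ⟨s, hs, hsu : f s y = u⟩ := intermediate_value_Icc hx
    ((hf.continuousOn_left hy).mono (Icc_subset_Icc hx₀.1 hx₁.2))
    ⟨ha.trans hu'.1.le, hu'.2.le.trans hb⟩
  exact (hf.continuousOn_left hy).exists_mem_apply_mem_of_subset_closure hU hUdense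
    (hUopen.inter isOpen_Ioo)
    ⟨s, ⟨hx₀.1.trans hs.1, hs.2.trans hx₁.2⟩, mem_preimage.2 (hsu ▸ ⟨hu, hu'⟩)⟩

end IsContinuousTnorm


noncomputable def supExtension (ψ : ℝ → ℝ) (U : Set ℝ) (x : ℝ) : ℝ :=
  sSup (ψ '' (Icc 0 x ∩ U))

section supExtension

variable {ψ : ℝ → ℝ} {U U₂ : Set ℝ}

theorem supExtension_le (hψ : MonotoneOn ψ U) {x u : ℝ} (hu : u ∈ U) (hxu : x ≤ u)
    (hψu : 0 ≤ ψ u) : supExtension ψ U x ≤ ψ u :=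
  Real.sSup_le (by rintro _ ⟨t, ⟨⟨-, htx⟩, htU⟩, rfl⟩; exact hψ htU hu (htx.trans hxu)) hψu

theorem le_supExtension (hψU : MapsTo ψ U (Icc 0 1)) {x u : ℝ} (hu : u ∈ U) (hu0 : 0 ≤ u)
    (hux : u ≤ x) : ψ u ≤ supExtension ψ U x :=
  le_csSup ⟨1, by rintro _ ⟨t, ⟨-, htU⟩, rfl⟩; exact (hψU htU).2⟩ ⟨u, ⟨⟨hu0, hux⟩, hu⟩, rfl⟩

theorem supExtension_mem_Icc (hψU : MapsTo ψ U (Icc 0 1)) (x : ℝ) :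
    supExtension ψ U x ∈ Icc 0 1 :=
  ⟨Real.sSup_nonneg (by rintro _ ⟨t, ⟨-, htU⟩, rfl⟩; exact (hψU htU).1),
    Real.sSup_le (by rintro _ ⟨t, ⟨-, htU⟩, rfl⟩; exact (hψU htU).2) zero_le_one⟩

theorem supExtension_eq_of_mem (hU : U ⊆ Icc 0 1) (hψU : MapsTo ψ U (Icc 0 1))
    (hψ : MonotoneOn ψ U) {x : ℝ} (hx : x ∈ U) : supExtension ψ U x = ψ x :=
  le_antisymm (supExtension_le hψ hx le_rfl (hψU hx).1) (le_supExtension hψU hx (hU hx).1 le_rfl)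

theorem strictMonoOn_supExtension (hU : U ⊆ Icc 0 1) (hUdense : Icc 0 1 ⊆ closure U)
    (hψU : MapsTo ψ U (Icc 0 1)) (hψ : StrictMonoOn ψ U) :
    StrictMonoOn (supExtension ψ U) (Icc 0 1) := by
  intro a ha b hb hab
  obtain ⟨v, hv, hav, hvb⟩ := exists_mem_Ioo_of_Icc_subset_closure hUdense ha.1 hab hb.2
  obtain ⟨u, hu, hau, huv⟩ := exists_mem_Ioo_of_Icc_subset_closure hUdense ha.1 hav (hU hv).2
  calc supExtension ψ U a ≤ ψ u := supExtension_le hψ.monotoneOn hu hau.le (hψU hu).1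
    _ < ψ v := hψ hu hv huv
    _ ≤ supExtension ψ U b := le_supExtension hψU hv (hU hv).1 hvb.le

theorem bijOn_supExtension (hU : U ⊆ Icc 0 1) (hUdense : Icc 0 1 ⊆ closure U)
    (hU₂dense : Icc 0 1 ⊆ closure U₂) (hψU : MapsTo ψ U (Icc 0 1)) (hsurj : SurjOn ψ U U₂)
    (hψ : StrictMonoOn ψ U) : BijOn (supExtension ψ U) (Icc 0 1) (Icc 0 1) := by
  have hφ := strictMonoOn_supExtension hU hUdense hψU hψ
  have hmaps : MapsTo (supExtension ψ U) (Icc 0 1) (Icc 0 1) :=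
    fun x _ => supExtension_mem_Icc hψU x
  refine ⟨hmaps, hφ.injOn, hφ.surjOn_Icc_of_forall_exists_mem_Ioo hmaps fun a b ha hab hb => ?_⟩
  obtain ⟨w, hw, hwab⟩ := exists_mem_Ioo_of_Icc_subset_closure hU₂dense ha hab hb
  obtain ⟨u, hu, rfl⟩ := hsurj hw
  exact ⟨u, hU hu, (supExtension_eq_of_mem hU hψU hψ.monotoneOn hu).symm ▸ hwab⟩

theorem supExtension_eq_of_forall_lt_of_forall_gt (hU : U ⊆ Icc 0 1) (hUdense : Icc 0 1 ⊆ closure U)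
    (hU₂dense : Icc 0 1 ⊆ closure U₂) (hψU : MapsTo ψ U (Icc 0 1)) (hsurj : SurjOn ψ U U₂)
    (hψ : StrictMonoOn ψ U) {c v : ℝ} (hc : c ∈ Icc 0 1) (hv : v ∈ Icc 0 1)
    (hlt : ∀ t ∈ U, t < c → ψ t ≤ v) (hgt : ∀ t ∈ U, c < t → v ≤ ψ t) :
    supExtension ψ U c = v := by
  have hφ := strictMonoOn_supExtension hU hUdense hψU hψ
  have hφc := supExtension_mem_Icc hψU c
  rcases lt_trichotomy (supExtension ψ U c) v with h | h | h
  · obtain ⟨w, hw, hcw, hwv⟩ := exists_mem_Ioo_of_Icc_subset_closure hU₂dense hφc.1 h hv.2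
    obtain ⟨t, ht, rfl⟩ := hsurj hw
    rw [← supExtension_eq_of_mem hU hψU hψ.monotoneOn ht] at hcw
    exact absurd (hgt t ht ((hφ.lt_iff_lt hc (hU ht)).1 hcw)) hwv.not_ge
  · exact h
  · obtain ⟨w, hw, hvw, hwc⟩ := exists_mem_Ioo_of_Icc_subset_closure hU₂dense hv.1 h hφc.2
    obtain ⟨t, ht, rfl⟩ := hsurj hw
    rw [← supExtension_eq_of_mem hU hψU hψ.monotoneOn ht] at hwc
    exact absurd (hlt t ht ((hφ.lt_iff_lt (hU ht) hc).1 hwc)) hvw.not_ge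

end supExtension

section Homomorphism

variable {ψ : ℝ → ℝ} {U U₂ : Set ℝ} {f g : ℝ → ℝ → ℝ} {x y t : ℝ}

theorem le_map_apply_of_lt_apply (hf : IsContinuousTnorm f) (hg : IsContinuousTnorm g)
    (hU : U ⊆ Icc 0 1) (hUopen : IsOpen U) (hUdense : Icc 0 1 ⊆ closure U)
    (hψU : MapsTo ψ U (Icc 0 1)) (hψ : MonotoneOn ψ U)
    (hhom : ∀ x ∈ U, ∀ y ∈ U, ψ (f x y) = g (ψ x) (ψ y))
    (hx : x ∈ U) (hy : y ∈ U) (ht : t ∈ U) (htxy : t < f x y) : ψ t ≤ g (ψ x) (ψ y) := by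
  have h0 : (0 : ℝ) ∈ Icc (0 : ℝ) 1 := left_mem_Icc.2 zero_le_one
  obtain ⟨s, hs, hsU, hts, hsxy⟩ := hf.exists_mem_apply_mem_Ioo hU hUopen hUdense h0 (hU hx)
    (hU hy) (hU hx).1 ((hf.zero_left (hU hy)).trans_le (hU ht).1) htxy le_rfl
  have hsx : s ≤ x := not_lt.1 fun hxs =>
    (hf.mono (hU hx) (hU hs) (hU hy) (hU hy) hxs.le le_rfl).not_gt hsxy
  calc ψ t ≤ ψ (f s y) := hψ ht hsU hts.le
    _ = g (ψ s) (ψ y) := hhom s hs y hy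
    _ ≤ g (ψ x) (ψ y) := hg.mono (hψU hs) (hψU hx) (hψU hy) (hψU hy) (hψ hs hx hsx) le_rfl

theorem map_apply_le_of_apply_lt (hf : IsContinuousTnorm f) (hg : IsContinuousTnorm g)
    (hU : U ⊆ Icc 0 1) (hUopen : IsOpen U) (hUdense : Icc 0 1 ⊆ closure U)
    (hψU : MapsTo ψ U (Icc 0 1)) (hψ : MonotoneOn ψ U)
    (hhom : ∀ x ∈ U, ∀ y ∈ U, ψ (f x y) = g (ψ x) (ψ y))
    (hx : x ∈ U) (hy : y ∈ U) (ht : t ∈ U) (hxyt : f x y < t) : g (ψ x) (ψ y) ≤ ψ t := by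
  rcases le_or_gt y t with hyt | hty
  · exact (hg.le_right (hψU hx) (hψU hy)).trans (hψ hy ht hyt)
  have h1 : (1 : ℝ) ∈ Icc (0 : ℝ) 1 := right_mem_Icc.2 zero_le_one
  obtain ⟨s, hs, hsU, hxys, hst⟩ := hf.exists_mem_apply_mem_Ioo hU hUopen hUdense (hU hx) h1
    (hU hy) (hU hx).2 le_rfl hxyt (hty.le.trans_eq (hf.one_left (hU hy)).symm)
  have hxs : x ≤ s := not_lt.1 fun hsx =>
    (hf.mono (hU hs) (hU hx) (hU hy) (hU hy) hsx.le le_rfl).not_gt hxys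
  calc g (ψ x) (ψ y) ≤ g (ψ s) (ψ y) :=
        hg.mono (hψU hx) (hψU hs) (hψU hy) (hψU hy) (hψ hx hs hxs) le_rfl
    _ = ψ (f s y) := (hhom s hs y hy).symm
    _ ≤ ψ t := hψ hsU ht hst.le

theorem supExtension_apply_eq (hf : IsContinuousTnorm f) (hg : IsContinuousTnorm g)
    (hU : U ⊆ Icc 0 1) (hUopen : IsOpen U) (hUdense : Icc 0 1 ⊆ closure U)
    (hU₂dense : Icc 0 1 ⊆ closure U₂) (hψU : MapsTo ψ U (Icc 0 1)) (hsurj : SurjOn ψ U U₂)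
    (hψ : StrictMonoOn ψ U) (hhom : ∀ x ∈ U, ∀ y ∈ U, ψ (f x y) = g (ψ x) (ψ y))
    (hx : x ∈ U) (hy : y ∈ U) : supExtension ψ U (f x y) = g (ψ x) (ψ y) :=
  supExtension_eq_of_forall_lt_of_forall_gt hU hUdense hU₂dense hψU hsurj hψ
    (hf.mem_Icc (hU hx) (hU hy)) (hg.mem_Icc (hψU hx) (hψU hy))
    (fun _ ht => le_map_apply_of_lt_apply hf hg hU hUopen hUdense hψU hψ.monotoneOn hhom hx hy ht)
    (fun _ ht => map_apply_le_of_apply_lt hf hg hU hUopen hUdense hψU hψ.monotoneOn hhom hx hy ht)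

end Homomorphism

theorem IsContinuousTnorm.map_apply_of_eqOn_dense {f g : ℝ → ℝ → ℝ} (hf : IsContinuousTnorm f)
    (hg : IsContinuousTnorm g) {φ : ℝ → ℝ} {U : Set ℝ} (hU : U ⊆ Icc 0 1)
    (hUdense : Icc 0 1 ⊆ closure U) (hφ : ContinuousOn φ (Icc 0 1))
    (hφmaps : MapsTo φ (Icc 0 1) (Icc 0 1))
    (hφU : ∀ x ∈ U, ∀ y ∈ U, φ (f x y) = g (φ x) (φ y)) {x y : ℝ} (hx : x ∈ Icc 0 1)
    (hy : y ∈ Icc 0 1) : φ (f x y) = g (φ x) (φ y) := by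
  refine EqOn.of_subset_closure (f := fun p : ℝ × ℝ => φ (f p.1 p.2))
    (g := fun p : ℝ × ℝ => g (φ p.1) (φ p.2)) (fun p hp => hφU p.1 hp.1 p.2 hp.2)
    (hφ.comp hf.continuousOn fun p hp => hf.mem_Icc hp.1 hp.2)
    (hg.continuousOn.comp ((hφ.comp continuousOn_fst fun p hp => hp.1).prodMk
      (hφ.comp continuousOn_snd fun p hp => hp.2)) fun p hp => ⟨hφmaps hp.1, hφmaps hp.2⟩)
    (prod_mono hU hU) ?_ (mk_mem_prod hx hy)
  rw [closure_prod_eq]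
  exact prod_mono hUdense hUdense

theorem extend_iso_from_dense_general
    (f g : ℝ → ℝ → ℝ) (hf : IsContinuousTnorm f) (hg : IsContinuousTnorm g)
    (U₁ U₂ : Set ℝ)
    (hU₁ : U₁ ⊆ Set.Icc 0 1) (hU₂ : U₂ ⊆ Set.Icc 0 1)
    (hU₁open : IsOpen U₁)
    (hU₁dense : Set.Icc (0:ℝ) 1 ⊆ closure U₁)
    (hU₂dense : Set.Icc (0:ℝ) 1 ⊆ closure U₂)
    (ψ : ℝ → ℝ)
    (hbij : Set.BijOn ψ U₁ U₂)
    (hmono : StrictMonoOn ψ U₁)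
    (hhom : ∀ x ∈ U₁, ∀ y ∈ U₁, ψ (f x y) = g (ψ x) (ψ y)) :
    let φ : ℝ → ℝ := fun x => sSup (ψ '' (Set.Icc 0 x ∩ U₁))
    StrictMonoOn φ (Set.Icc 0 1) ∧
    Set.BijOn φ (Set.Icc 0 1) (Set.Icc 0 1) ∧
    (∀ x ∈ U₁, φ x = ψ x) ∧
    (∀ x ∈ Set.Icc (0:ℝ) 1, ∀ y ∈ Set.Icc (0:ℝ) 1, φ (f x y) = g (φ x) (φ y)) := by
  show StrictMonoOn (supExtension ψ U₁) _ ∧ _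
  have hψU : MapsTo ψ U₁ (Icc 0 1) := hbij.mapsTo.mono_right hU₂
  have hφψ : ∀ x ∈ U₁, supExtension ψ U₁ x = ψ x :=
    fun x hx => supExtension_eq_of_mem hU₁ hψU hmono.monotoneOn hx
  have hφmono := strictMonoOn_supExtension hU₁ hU₁dense hψU hmono
  have hφbij := bijOn_supExtension hU₁ hU₁dense hU₂dense hψU hbij.surjOn hmono
  refine ⟨hφmono, hφbij, hφψ, fun x hx y hy => ?_⟩
  refine hf.map_apply_of_eqOn_dense hg hU₁ hU₁dense
    (hφmono.continuousOn_of_image_eq hφbij.image_eq) hφbij.mapsTo (fun u hu v hv => ?_) hx hy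
  rw [hφψ u hu, hφψ v hv]
  exact supExtension_apply_eq hf hg hU₁ hU₁open hU₁dense hU₂dense hψU hbij.surjOn hmono hhom hu hv

/-- An order- and operation-preserving bijection between open dense subsets of
[0,1] extends, via suprema, to an isomorphism of the continuous t-norms. -/
theorem extend_iso_from_dense
    (f g : ℝ → ℝ → ℝ) (hf : IsContinuousTnorm f) (hg : IsContinuousTnorm g)
    (U₁ U₂ : Set ℝ)
    (hU₁ : U₁ ⊆ Set.Icc 0 1) (hU₂ : U₂ ⊆ Set.Icc 0 1)
    (hU₁open : IsOpen U₁) (hU₂open : IsOpen U₂)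
    (hU₁dense : Set.Icc (0:ℝ) 1 ⊆ closure U₁)
    (hU₂dense : Set.Icc (0:ℝ) 1 ⊆ closure U₂)
    (ψ : ℝ → ℝ)
    (hbij : Set.BijOn ψ U₁ U₂)
    (hmono : StrictMonoOn ψ U₁)
    (hhom : ∀ x ∈ U₁, ∀ y ∈ U₁, ψ (f x y) = g (ψ x) (ψ y)) :
    let φ : ℝ → ℝ := fun x => sSup (ψ '' (Set.Icc 0 x ∩ U₁))
    StrictMonoOn φ (Set.Icc 0 1) ∧
    Set.BijOn φ (Set.Icc 0 1) (Set.Icc 0 1) ∧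
    (∀ x ∈ U₁, φ x = ψ x) ∧
    (∀ x ∈ Set.Icc (0:ℝ) 1, ∀ y ∈ Set.Icc (0:ℝ) 1, φ (f x y) = g (φ x) (φ y)) :=
  extend_iso_from_dense_general f g hf hg U₁ U₂ hU₁ hU₂ hU₁open hU₁dense hU₂dense ψ hbij hmono hhom
end
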